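/- Let N ≥ 1, let u : ℝ × ℝ → ℝ and U : ℝ × ℝ → ℝ^N be smooth solutions of u_t = u_{xxx} - (3/2)u²u_x + (3/2)u_x⟨U,U⟩ + u⟨U,U_x⟩ + ⟨U,U_{xx}⟩ + ⟨U_x,U_x⟩ and U_t = -u_x U_x - ½u²U_x + (3/2)⟨U,U⟩U_x. Then w := -u_x + ½u² - ½⟨U,U⟩ satisfies the KdV equation w_t = w_{xxx} - 3 w w_x, and u satisfies u_t = -2u_x² + u²u_x - 3wu_x - w_x u - w_{xx}. -/

import Mathlib

noncomputable section

/-- partial derivative in the first (space) variable -/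
def pdx (f : ℝ → ℝ → ℝ) : ℝ → ℝ → ℝ := fun x t => deriv (fun y => f y t) x

/-- partial derivative in the second (time) variable -/
def pdt (f : ℝ → ℝ → ℝ) : ℝ → ℝ → ℝ := fun x t => deriv (fun s => f x s) t

/-- smoothness of a function of two real variables -/
def smooth2 (f : ℝ → ℝ → ℝ) : Prop := ContDiff ℝ (⊤ : ℕ∞) (fun p : ℝ × ℝ => f p.1 p.2)

/-- componentwise partial x-derivative of a vector-valued function -/
def pdxV {N : ℕ} (U : ℝ → ℝ → Fin N → ℝ) : ℝ → ℝ → Fin N → ℝ :=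
  fun x t i => deriv (fun y => U y t i) x

/-- componentwise partial t-derivative of a vector-valued function -/
def pdtV {N : ℕ} (U : ℝ → ℝ → Fin N → ℝ) : ℝ → ℝ → Fin N → ℝ :=
  fun x t i => deriv (fun s => U x s i) t

/-- pointwise Euclidean inner product of two vector-valued functions -/
def ip {N : ℕ} (A B : ℝ → ℝ → Fin N → ℝ) : ℝ → ℝ → ℝ :=
  fun x t => ∑ i, A x t i * B x t i

/-- componentwise smoothness of a vector-valued function of two real variables -/
def smooth2V {N : ℕ} (U : ℝ → ℝ → Fin N → ℝ) : Prop :=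
  ∀ i, ContDiff ℝ (⊤ : ℕ∞) (fun p : ℝ × ℝ => U p.1 p.2 i)

theorem hasFDerivAt_lineX (t x : ℝ) :
    HasFDerivAt (fun y : ℝ => (y, t)) ((ContinuousLinearMap.id ℝ ℝ).prod 0) x :=
  (hasFDerivAt_id x).prodMk (hasFDerivAt_const t x)

theorem hasFDerivAt_lineT (x t : ℝ) :
    HasFDerivAt (fun s : ℝ => (x, s)) ((0 : ℝ →L[ℝ] ℝ).prod (ContinuousLinearMap.id ℝ ℝ)) t :=
  (hasFDerivAt_const x t).prodMk (hasFDerivAt_id t)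

theorem hda_x {f : ℝ → ℝ → ℝ} (hf : smooth2 f) (x t : ℝ) :
    HasDerivAt (fun y => f y t) (fderiv ℝ (fun p : ℝ × ℝ => f p.1 p.2) (x, t) (1, 0)) x := by
  have hF := (hf.differentiable (by simp) (x, t)).hasFDerivAt
  simpa [Function.comp_def] using (hF.comp x (hasFDerivAt_lineX t x)).hasDerivAt

theorem hda_t {f : ℝ → ℝ → ℝ} (hf : smooth2 f) (x t : ℝ) :
    HasDerivAt (fun s => f x s) (fderiv ℝ (fun p : ℝ × ℝ => f p.1 p.2) (x, t) (0, 1)) t := by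
  have hF := (hf.differentiable (by simp) (x, t)).hasFDerivAt
  simpa [Function.comp_def] using (hF.comp t (hasFDerivAt_lineT x t)).hasDerivAt

theorem pdx_eq {f : ℝ → ℝ → ℝ} (hf : smooth2 f) (x t : ℝ) :
    pdx f x t = fderiv ℝ (fun p : ℝ × ℝ => f p.1 p.2) (x, t) (1, 0) :=
  (hda_x hf x t).deriv

theorem pdt_eq {f : ℝ → ℝ → ℝ} (hf : smooth2 f) (x t : ℝ) :
    pdt f x t = fderiv ℝ (fun p : ℝ × ℝ => f p.1 p.2) (x, t) (0, 1) :=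
  (hda_t hf x t).deriv

/-- `HasDerivAt` for the x-slice, with value `pdx f x t`. -/
theorem hpdx {f : ℝ → ℝ → ℝ} (hf : smooth2 f) (x t : ℝ) :
    HasDerivAt (fun y => f y t) (pdx f x t) x := by
  rw [pdx_eq hf]; exact hda_x hf x t

theorem hpdt {f : ℝ → ℝ → ℝ} (hf : smooth2 f) (x t : ℝ) :
    HasDerivAt (fun s => f x s) (pdt f x t) t := by
  rw [pdt_eq hf]; exact hda_t hf x t

theorem smooth2_pdx {f : ℝ → ℝ → ℝ} (hf : smooth2 f) : smooth2 (pdx f) := by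
  have h : (fun p : ℝ × ℝ => pdx f p.1 p.2)
      = fun p : ℝ × ℝ => fderiv ℝ (fun q : ℝ × ℝ => f q.1 q.2) p ((1 : ℝ), (0 : ℝ)) := by
    funext p; exact pdx_eq hf p.1 p.2
  rw [smooth2, h]
  exact (hf.fderiv_right (by simp)).clm_apply contDiff_const

theorem smooth2_pdt {f : ℝ → ℝ → ℝ} (hf : smooth2 f) : smooth2 (pdt f) := by
  have h : (fun p : ℝ × ℝ => pdt f p.1 p.2)
      = fun p : ℝ × ℝ => fderiv ℝ (fun q : ℝ × ℝ => f q.1 q.2) p ((0 : ℝ), (1 : ℝ)) := by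
    funext p; exact pdt_eq hf p.1 p.2
  rw [smooth2, h]
  exact (hf.fderiv_right (by simp)).clm_apply contDiff_const

/-- Clairaut: mixed partials commute for smooth functions. -/
theorem pdt_pdx_comm {f : ℝ → ℝ → ℝ} (hf : smooth2 f) (x t : ℝ) :
    pdt (pdx f) x t = pdx (pdt f) x t := by
  set F : ℝ × ℝ → ℝ := fun p => f p.1 p.2 with hFdef
  have hdF : ∀ y, HasFDerivAt F (fderiv ℝ F y) y :=
    fun y => (hf.differentiable (by simp) y).hasFDerivAt
  have hF' : ContDiff ℝ (⊤ : ℕ∞) (fderiv ℝ F) := hf.fderiv_right (by simp)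
  have hdF' : HasFDerivAt (fderiv ℝ F) (fderiv ℝ (fderiv ℝ F) (x, t)) (x, t) :=
    (hF'.differentiable (by simp) (x, t)).hasFDerivAt
  have symm := second_derivative_symmetric hdF hdF' ((1:ℝ), (0:ℝ)) ((0:ℝ), (1:ℝ))
  have key : ∀ v : ℝ × ℝ,
      fderiv ℝ (fun p : ℝ × ℝ => fderiv ℝ F p v) (x, t)
        = (fderiv ℝ (fderiv ℝ F) (x, t)).flip v := by
    intro v
    have := fderiv_clm_apply (c := fderiv ℝ F) (u := fun _ : ℝ × ℝ => v)
      (hF'.differentiable (by simp) (x, t)) (differentiableAt_const v)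
    simpa using this
  have e1 : pdt (pdx f) x t = fderiv ℝ (fderiv ℝ F) (x, t) (0, 1) (1, 0) := by
    have h1 : smooth2 (pdx f) := smooth2_pdx hf
    rw [pdt_eq h1 x t]
    have h2 : (fun p : ℝ × ℝ => pdx f p.1 p.2)
        = fun p : ℝ × ℝ => fderiv ℝ F p ((1:ℝ), (0:ℝ)) := by
      funext p; exact pdx_eq hf p.1 p.2
    rw [h2, key ((1:ℝ),(0:ℝ))]
    rfl
  have e2 : pdx (pdt f) x t = fderiv ℝ (fderiv ℝ F) (x, t) (1, 0) (0, 1) := by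
    have h1 : smooth2 (pdt f) := smooth2_pdt hf
    rw [pdx_eq h1 x t]
    have h2 : (fun p : ℝ × ℝ => pdt f p.1 p.2)
        = fun p : ℝ × ℝ => fderiv ℝ F p ((0:ℝ), (1:ℝ)) := by
      funext p; exact pdt_eq hf p.1 p.2
    rw [h2, key ((0:ℝ),(1:ℝ))]
    rfl
  rw [e1, e2, symm]

theorem ip_comm {N : ℕ} (A B : ℝ → ℝ → Fin N → ℝ) : ip A B = ip B A := by
  funext x t
  exact Finset.sum_congr rfl fun i _ => mul_comm _ _

theorem smooth2V_pdxV {N : ℕ} {A : ℝ → ℝ → Fin N → ℝ} (hA : smooth2V A) :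
    smooth2V (pdxV A) :=
  fun i => smooth2_pdx (f := fun a b => A a b i) (hA i)

theorem hpdxV {N : ℕ} {A : ℝ → ℝ → Fin N → ℝ} (hA : smooth2V A) (x t : ℝ) (i : Fin N) :
    HasDerivAt (fun y => A y t i) (pdxV A x t i) x :=
  hpdx (f := fun a b => A a b i) (hA i) x t

theorem smooth2_ip {N : ℕ} {A B : ℝ → ℝ → Fin N → ℝ} (hA : smooth2V A) (hB : smooth2V B) :
    smooth2 (ip A B) := by
  have : (fun p : ℝ × ℝ => ip A B p.1 p.2)
      = fun p : ℝ × ℝ => ∑ i, A p.1 p.2 i * B p.1 p.2 i := rfl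
  rw [smooth2, this]
  exact ContDiff.sum fun i _ => (hA i).mul (hB i)

theorem hpdx_ip {N : ℕ} {A B : ℝ → ℝ → Fin N → ℝ} (hA : smooth2V A) (hB : smooth2V B)
    (x t : ℝ) :
    HasDerivAt (fun y => ip A B y t) (ip (pdxV A) B x t + ip A (pdxV B) x t) x := by
  have H : HasDerivAt (fun y => ∑ i, A y t i * B y t i)
      (∑ i, (pdxV A x t i * B x t i + A x t i * pdxV B x t i)) x :=
    HasDerivAt.fun_sum fun i _ => (hpdxV hA x t i).mul (hpdxV hB x t i)
  simpa [ip, Finset.sum_add_distrib] using H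

theorem hpdtV {N : ℕ} {A : ℝ → ℝ → Fin N → ℝ} (hA : smooth2V A) (x t : ℝ) (i : Fin N) :
    HasDerivAt (fun s => A x s i) (pdtV A x t i) t :=
  hpdt (f := fun a b => A a b i) (hA i) x t

theorem hpdt_ip {N : ℕ} {A B : ℝ → ℝ → Fin N → ℝ} (hA : smooth2V A) (hB : smooth2V B)
    (x t : ℝ) :
    HasDerivAt (fun s => ip A B x s) (ip (pdtV A) B x t + ip A (pdtV B) x t) t := by
  have H : HasDerivAt (fun s => ∑ i, A x s i * B x s i)
      (∑ i, (pdtV A x t i * B x t i + A x t i * pdtV B x t i)) t :=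
    HasDerivAt.fun_sum fun i _ => (hpdtV hA x t i).mul (hpdtV hB x t i)
  simpa [ip, Finset.sum_add_distrib] using H

/-- `pdx` of `ip`. -/
theorem pdx_ip {N : ℕ} {A B : ℝ → ℝ → Fin N → ℝ} (hA : smooth2V A) (hB : smooth2V B)
    (x t : ℝ) :
    pdx (ip A B) x t = ip (pdxV A) B x t + ip A (pdxV B) x t :=
  (hpdx_ip hA hB x t).deriv

/-- triangularization of system (4.21) via `w = -u_x + u²/2 - ⟨U,U⟩/2`. -/
theorem stmt_5 {N : ℕ} (hN : 1 ≤ N) (u : ℝ → ℝ → ℝ) (U : ℝ → ℝ → Fin N → ℝ)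
    (hu : smooth2 u) (hU : smooth2V U)
    (heq1 : ∀ x t, pdt u x t =
      pdx (pdx (pdx u)) x t - (3/2) * (u x t) ^ 2 * pdx u x t
      + (3/2) * pdx u x t * ip U U x t + u x t * ip U (pdxV U) x t
      + ip U (pdxV (pdxV U)) x t + ip (pdxV U) (pdxV U) x t)
    (heq2 : ∀ x t i, pdtV U x t i =
      -pdx u x t * pdxV U x t i - (1/2) * (u x t) ^ 2 * pdxV U x t i
      + (3/2) * ip U U x t * pdxV U x t i)
    (w : ℝ → ℝ → ℝ)
    (hw : ∀ x t, w x t = -pdx u x t + (1/2) * (u x t) ^ 2 - (1/2) * ip U U x t) :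
    (∀ x t, pdt w x t = pdx (pdx (pdx w)) x t - 3 * w x t * pdx w x t) ∧
    (∀ x t, pdt u x t = -2 * (pdx u x t) ^ 2 + (u x t) ^ 2 * pdx u x t
      - 3 * w x t * pdx u x t - pdx w x t * u x t - pdx (pdx w) x t) := by
  have hu1 : smooth2 (pdx u) := smooth2_pdx hu
  have hu2 : smooth2 (pdx (pdx u)) := smooth2_pdx hu1
  have hu3 : smooth2 (pdx (pdx (pdx u))) := smooth2_pdx hu2
  have hUx : smooth2V (pdxV U) := smooth2V_pdxV hU
  have hUxx : smooth2V (pdxV (pdxV U)) := smooth2V_pdxV hUx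
  -- E1 : first x-derivative of w
  have E1 : ∀ x t, pdx w x t
      = -pdx (pdx u) x t + u x t * pdx u x t - ip U (pdxV U) x t := by
    intro x t
    have hfun : (fun y => w y t)
        = fun y => -pdx u y t + (1/2) * (u y t) ^ 2 - (1/2) * ip U U y t :=
      funext fun y => hw y t
    have H : HasDerivAt (fun y => -pdx u y t + (1/2) * (u y t) ^ 2 - (1/2) * ip U U y t)
        (-(pdx (pdx u) x t) + (1/2) * (↑2 * u x t ^ (2-1) * pdx u x t)
          - (1/2) * (ip (pdxV U) U x t + ip U (pdxV U) x t)) x :=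
      (((hpdx hu1 x t).neg.add (((hpdx hu x t).pow 2).const_mul (1/2))).sub
        ((hpdx_ip hU hU x t).const_mul (1/2)))
    show deriv (fun y => w y t) x = _
    rw [hfun, H.deriv, ip_comm (pdxV U) U]
    push_cast
    ring
  -- E2 : second x-derivative of w
  have E2 : ∀ x t, pdx (pdx w) x t
      = -pdx (pdx (pdx u)) x t + (pdx u x t) ^ 2 + u x t * pdx (pdx u) x t
        - ip (pdxV U) (pdxV U) x t - ip U (pdxV (pdxV U)) x t := by
    intro x t
    have hfun : (fun y => pdx w y t)
        = fun y => -pdx (pdx u) y t + u y t * pdx u y t - ip U (pdxV U) y t :=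
      funext fun y => E1 y t
    have H : HasDerivAt (fun y => -pdx (pdx u) y t + u y t * pdx u y t - ip U (pdxV U) y t)
        (-(pdx (pdx (pdx u)) x t)
          + (pdx u x t * pdx u x t + u x t * pdx (pdx u) x t)
          - (ip (pdxV U) (pdxV U) x t + ip U (pdxV (pdxV U)) x t)) x :=
      ((hpdx hu2 x t).neg.add ((hpdx hu x t).mul (hpdx hu1 x t))).sub
        (hpdx_ip hU hUx x t)
    show deriv (fun y => pdx w y t) x = _
    rw [hfun, H.deriv]
    ring
  -- E3 : third x-derivative of w
  have E3 : ∀ x t, pdx (pdx (pdx w)) x t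
      = -pdx (pdx (pdx (pdx u))) x t + 3 * pdx u x t * pdx (pdx u) x t
        + u x t * pdx (pdx (pdx u)) x t
        - 3 * ip (pdxV U) (pdxV (pdxV U)) x t - ip U (pdxV (pdxV (pdxV U))) x t := by
    intro x t
    have hfun : (fun y => pdx (pdx w) y t)
        = fun y => -pdx (pdx (pdx u)) y t + (pdx u y t) ^ 2 + u y t * pdx (pdx u) y t
          - ip (pdxV U) (pdxV U) y t - ip U (pdxV (pdxV U)) y t :=
      funext fun y => E2 y t
    have H : HasDerivAt (fun y => -pdx (pdx (pdx u)) y t + (pdx u y t) ^ 2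
          + u y t * pdx (pdx u) y t - ip (pdxV U) (pdxV U) y t - ip U (pdxV (pdxV U)) y t)
        (-(pdx (pdx (pdx (pdx u))) x t)
          + (↑2 * (pdx u x t) ^ (2-1) * pdx (pdx u) x t)
          + (pdx u x t * pdx (pdx u) x t + u x t * pdx (pdx (pdx u)) x t)
          - (ip (pdxV (pdxV U)) (pdxV U) x t + ip (pdxV U) (pdxV (pdxV U)) x t)
          - (ip (pdxV U) (pdxV (pdxV U)) x t + ip U (pdxV (pdxV (pdxV U))) x t)) x :=
      ((((hpdx hu3 x t).neg.add ((hpdx hu1 x t).pow 2)).add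
        ((hpdx hu x t).mul (hpdx hu2 x t))).sub (hpdx_ip hUx hUx x t)).sub
        (hpdx_ip hU hUxx x t)
    show deriv (fun y => pdx (pdx w) y t) x = _
    rw [hfun, H.deriv, ip_comm (pdxV (pdxV U)) (pdxV U)]
    push_cast
    ring
  -- E4 : x-derivative of the right-hand side of heq1, i.e. of pdt u
  have E4 : ∀ x t, pdx (pdt u) x t
      = pdx (pdx (pdx (pdx u))) x t
        - 3 * u x t * (pdx u x t) ^ 2 - (3/2) * (u x t) ^ 2 * pdx (pdx u) x t
        + (3/2) * pdx (pdx u) x t * ip U U x t + 4 * pdx u x t * ip U (pdxV U) x t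
        + u x t * ip (pdxV U) (pdxV U) x t + u x t * ip U (pdxV (pdxV U)) x t
        + 3 * ip (pdxV U) (pdxV (pdxV U)) x t + ip U (pdxV (pdxV (pdxV U))) x t := by
    intro x t
    have hfun : (fun y => pdt u y t)
        = fun y => pdx (pdx (pdx u)) y t - (3/2) * (u y t) ^ 2 * pdx u y t
          + (3/2) * pdx u y t * ip U U y t + u y t * ip U (pdxV U) y t
          + ip U (pdxV (pdxV U)) y t + ip (pdxV U) (pdxV U) y t :=
      funext fun y => heq1 y t
    have H : HasDerivAt (fun y => pdx (pdx (pdx u)) y t - (3/2) * (u y t) ^ 2 * pdx u y t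
          + (3/2) * pdx u y t * ip U U y t + u y t * ip U (pdxV U) y t
          + ip U (pdxV (pdxV U)) y t + ip (pdxV U) (pdxV U) y t)
        (pdx (pdx (pdx (pdx u))) x t
          - ((3/2) * (↑2 * (u x t) ^ (2-1) * pdx u x t) * pdx u x t
              + (3/2) * (u x t) ^ 2 * pdx (pdx u) x t)
          + ((3/2) * pdx (pdx u) x t * ip U U x t
              + (3/2) * pdx u x t * (ip (pdxV U) U x t + ip U (pdxV U) x t))
          + (pdx u x t * ip U (pdxV U) x t
              + u x t * (ip (pdxV U) (pdxV U) x t + ip U (pdxV (pdxV U)) x t))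
          + (ip (pdxV U) (pdxV (pdxV U)) x t + ip U (pdxV (pdxV (pdxV U))) x t)
          + (ip (pdxV (pdxV U)) (pdxV U) x t + ip (pdxV U) (pdxV (pdxV U)) x t)) x :=
      (((((hpdx hu3 x t).sub
          ((((hpdx hu x t).pow 2).const_mul (3/2)).mul (hpdx hu1 x t))).add
          (((hpdx hu1 x t).const_mul (3/2)).mul (hpdx_ip hU hU x t))).add
          ((hpdx hu x t).mul (hpdx_ip hU hUx x t))).add
          (hpdx_ip hU hUxx x t)).add (hpdx_ip hUx hUx x t)
    show deriv (fun y => pdt u y t) x = _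
    rw [hfun, H.deriv, ip_comm (pdxV U) U, ip_comm (pdxV (pdxV U)) (pdxV U)]
    push_cast
    ring
  -- E5 : inner product with the time-derivative of U, via heq2
  have E5 : ∀ x t, ip U (pdtV U) x t
      = (-pdx u x t - (1/2) * (u x t) ^ 2 + (3/2) * ip U U x t) * ip U (pdxV U) x t := by
    intro x t
    have h : ∀ i : Fin N, U x t i * pdtV U x t i
        = (-pdx u x t - (1/2) * (u x t) ^ 2 + (3/2) * ip U U x t)
          * (U x t i * pdxV U x t i) := by
      intro i
      rw [heq2 x t i]
      ring
    show (∑ i, U x t i * pdtV U x t i) = _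
    rw [Finset.sum_congr rfl fun i _ => h i, ← Finset.mul_sum]
    rfl
  -- E6 : time derivative of w
  have E6 : ∀ x t, pdt w x t
      = -pdx (pdt u) x t + u x t * pdt u x t - ip U (pdtV U) x t := by
    intro x t
    have hfun : (fun s => w x s)
        = fun s => -pdx u x s + (1/2) * (u x s) ^ 2 - (1/2) * ip U U x s :=
      funext fun s => hw x s
    have H : HasDerivAt (fun s => -pdx u x s + (1/2) * (u x s) ^ 2 - (1/2) * ip U U x s)
        (-(pdt (pdx u) x t) + (1/2) * (↑2 * (u x t) ^ (2-1) * pdt u x t)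
          - (1/2) * (ip (pdtV U) U x t + ip U (pdtV U) x t)) t :=
      ((hpdt hu1 x t).neg.add (((hpdt hu x t).pow 2).const_mul (1/2))).sub
        ((hpdt_ip hU hU x t).const_mul (1/2))
    show deriv (fun s => w x s) t = _
    rw [hfun, H.deriv, ip_comm (pdtV U) U, pdt_pdx_comm hu x t]
    push_cast
    ring
  constructor
  · intro x t
    rw [E6 x t, E4 x t, heq1 x t, E5 x t, E3 x t, hw x t, E1 x t]
    ring
  · intro x t
    rw [heq1 x t, hw x t, E1 x t, E2 x t]
    ring
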